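/- arXiv:2208.02000 — 3 statements merged into one kernel-verified Lean document; each statement's English description precedes it below -/
import Mathlib

section
/- Let G be an undirected weighted graph with nonnegative edge weights, and let f(S,T) denote the minimum cost of an S-T cut. Let v_0, v_1, ..., v_k be distinct vertices with k ≥ 1. If f({v_0,...,v_{k-1}}, v_k) ≤ f({v_0,...,v_{i-1}}, v_i) for all i ∈ [k], then f({v_0,...,v_{k-1}}, v_k) = f({v_0}, v_k). -/
/-! Any cut `U` separating `v 0` from `v k` contains a first vertex `v i` of the sequence; then
`i ≥ 1` and `U` separates `v 0, …, v (i-1)` from `v i`, so by hypothesis its cost is at least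
`f({v_0,…,v_{k-1}}, v_k)`. The reverse inequality is monotonicity of `f` in the source set. -/

open Finset

variable {V : Type*} [Fintype V] [DecidableEq V]

noncomputable section

/-- Cost of the cut `U`: total weight of edges crossing between `U` and its complement. -/
def cutCost (w : V → V → ℝ) (U : Finset V) : ℝ :=
  ∑ u ∈ U, ∑ v ∈ Uᶜ, w u v

/-- `U` is an `S`-`T` cut: `T ⊆ U ⊆ V − S`. -/
def IsCut (S T U : Finset V) : Prop := T ⊆ U ∧ Disjoint U S

/-- Minimum cost of an `S`-`T` cut. -/
def minCutCost (w : V → V → ℝ) (S T : Finset V) : ℝ :=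
  sInf (cutCost w '' {U : Finset V | IsCut S T U})

/-- `U` is a minimum `S`-`T` cut. -/
def IsMinCut (w : V → V → ℝ) (S T U : Finset V) : Prop :=
  IsCut S T U ∧ cutCost w U = minCutCost w S T

lemma IsCut.mono_left {α : Type*} {S S' T U : Finset α} (hU : IsCut S T U) (h : S' ⊆ S) :
    IsCut S' T U :=
  ⟨hU.1, hU.2.mono_right h⟩

lemma isCut_compl {S T : Finset V} (h : Disjoint S T) : IsCut S T Sᶜ :=
  ⟨subset_compl_iff_disjoint_left.2 h, disjoint_compl_left⟩

lemma minCutCost_le_cutCost (w : V → V → ℝ) {S T U : Finset V} (hU : IsCut S T U) :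
    minCutCost w S T ≤ cutCost w U :=
  csInf_le ((Set.toFinite _).image _).bddBelow ⟨U, hU, rfl⟩

lemma le_minCutCost (w : V → V → ℝ) {S T : Finset V} {a : ℝ} (hST : Disjoint S T)
    (h : ∀ U, IsCut S T U → a ≤ cutCost w U) : a ≤ minCutCost w S T :=
  le_csInf ⟨_, Sᶜ, isCut_compl hST, rfl⟩ (by rintro _ ⟨U, hU, rfl⟩; exact h U hU)

lemma minCutCost_mono_left (w : V → V → ℝ) {S S' T : Finset V} (hS : S' ⊆ S)
    (hST : Disjoint S T) : minCutCost w S' T ≤ minCutCost w S T :=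
  le_minCutCost w hST fun _ hU => minCutCost_le_cutCost w (hU.mono_left hS)

lemma exists_isCut_range_image {α : Type*} [DecidableEq α] (v : ℕ → α) {U : Finset α} {k : ℕ}
    (h0 : v 0 ∉ U) (hk : v k ∈ U) : ∃ i, 1 ≤ i ∧ i ≤ k ∧ IsCut ((range i).image v) {v i} U := by
  have hex : ∃ i, v i ∈ U := ⟨k, hk⟩
  refine ⟨Nat.find hex, Nat.pos_of_ne_zero fun h => h0 (h ▸ Nat.find_spec hex),
    Nat.find_min' hex hk, singleton_subset_iff.2 (Nat.find_spec hex), disjoint_left.2 ?_⟩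
  rintro _ hxU hx
  obtain ⟨j, hj, rfl⟩ := mem_image.1 hx
  exact Nat.find_min hex (mem_range.1 hj) hxU

theorem goldberg_lemma_general (w : V → V → ℝ)
    (k : ℕ) (hk : 1 ≤ k) (v : ℕ → V)
    (hinj : ∀ i j, i ≤ k → j ≤ k → v i = v j → i = j)
    (h : ∀ i, 1 ≤ i → i ≤ k →
      minCutCost w ((Finset.range k).image v) {v k} ≤
        minCutCost w ((Finset.range i).image v) {v i}) :
    minCutCost w ((Finset.range k).image v) {v k} = minCutCost w {v 0} {v k} := by
  have hv0 : {v 0} ⊆ (range k).image v :=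
    singleton_subset_iff.2 (mem_image_of_mem v (mem_range.2 hk))
  have hvk : Disjoint ((range k).image v) {v k} := by
    rw [disjoint_singleton_right, mem_image]
    rintro ⟨i, hi, e⟩
    exact (mem_range.1 hi).ne (hinj i k (mem_range.1 hi).le le_rfl e)
  refine le_antisymm ?_ (minCutCost_mono_left w hv0 hvk)
  refine le_minCutCost w (hvk.mono_left hv0) fun U hU => ?_
  obtain ⟨i, hi, hik, hUi⟩ := exists_isCut_range_image v (disjoint_singleton_right.1 hU.2)
    (singleton_subset_iff.1 hU.1)
  exact (h i hi hik).trans (minCutCost_le_cutCost w hUi)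

/-- Goldberg's lemma: if `f({v_0,...,v_{k-1}}, v_k) ≤ f({v_0,...,v_{i-1}}, v_i)` for all
`i ∈ [k]`, then `f({v_0,...,v_{k-1}}, v_k) = f(v_0, v_k)`. -/
theorem goldberg_lemma (w : V → V → ℝ) (hw : ∀ u v, 0 ≤ w u v)
    (hsym : ∀ u v, w u v = w v u)
    (k : ℕ) (hk : 1 ≤ k) (v : ℕ → V)
    (hinj : ∀ i j, i ≤ k → j ≤ k → v i = v j → i = j)
    (h : ∀ i, 1 ≤ i → i ≤ k →
      minCutCost w ((Finset.range k).image v) {v k} ≤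
        minCutCost w ((Finset.range i).image v) {v i}) :
    minCutCost w ((Finset.range k).image v) {v k} = minCutCost w {v 0} {v k} :=
  goldberg_lemma_general w k hk v hinj h
end
end

section
/- Let G be a finite undirected weighted graph, X a set of vertices, and suppose for each unordered pair {u,v} of distinct vertices in X a set C_{uv} ⊆ V with v ∈ C_{uv}, u ∉ C_{uv} is given, where C_{vu} = V − C_{uv}, together with a strict total order ≺ on subsets of V such that exactly one of C_{uv} ≺ C_{vu} or C_{vu} ≺ C_{uv} holds, and with the property that C_{uv} is a minimum u-v cut and ≺ refines comparison by cut cost. Define u ⊑ v iff u = v or C_{vu} ≺ C_{uv}. Then ⊑ is a total order on X. (Key step: for any distinct a,b,c ∈ X, if C_{ab} is smallest among the six cuts C_{xy} w.r.t. ≺, then either c ∈ C_{ab} and C_{ac} = C_{ab}, or c ∉ C_{ab} and C_{cb} = C_{ab}; in either case ⊑ is not cyclic on {a,b,c}.) -/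
/-!
Suppose `a ⊑ b ⊑ c ⊑ a` with `a, b, c` distinct, and let `C b a` be the `≺`-least of the three
cuts `C b a`, `C c b`, `C a c` that the cycle puts below their reverses. If `c ∈ C b a`, then
`C b a` is also a `b`-`c` cut, so `C b c ⪯ C b a` by minimality, and `C c b ≺ C b c ⪯ C b a`;
otherwise `C b a` is a `c`-`a` cut and `C a c ≺ C c a ⪯ C b a`. Either way `C b a` was not least.
-/

open Finset

variable {V : Type*} [Fintype V] [DecidableEq V]

noncomputable section

theorem false_of_three_no_minimal {α : Type*} (r : α → α → Prop) [IsStrictOrder α r]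
    {x y z : α} (hx : r y x ∨ r z x) (hy : r z y ∨ r x y) (hz : r x z ∨ r y z) : False := by
  have h : ∀ a, ¬ r a a := irrefl_of r
  have t : ∀ {a b c}, r a b → r b c → r a c := trans_of r
  rcases hx with hx | hx <;> rcases hy with hy | hy <;> rcases hz with hz | hz <;>
    first
    | exact h _ (t hx hy) | exact h _ (t hy hz) | exact h _ (t hx hz)
    | exact h _ (t hx (t hz hy)) | exact h _ (t hx (t hy hz))

namespace IsCut

variable {V : Type*} {u v a b c : V} {A B U : Finset V}

theorem ne_of_swap (hA : IsCut {u} {v} A) (hB : IsCut {v} {u} B) : A ≠ B := by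
  rintro rfl
  exact disjoint_singleton_right.1 hB.2 (singleton_subset_iff.1 hA.1)

theorem of_mem (h : IsCut {b} {a} U) (hc : c ∈ U) : IsCut {b} {c} U :=
  ⟨singleton_subset_iff.2 hc, h.2⟩

theorem of_notMem (h : IsCut {b} {a} U) (hc : c ∉ U) : IsCut {c} {a} U :=
  ⟨h.1, disjoint_singleton_right.2 hc⟩

end IsCut

section MinimalCuts

variable {V : Type*} {X : Finset V} {lt : Finset V → Finset V → Prop} [IsStrictOrder (Finset V) lt]
  {C : V → V → Finset V}

theorem lt_or_lt_of_cycle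
    (hC_cut : ∀ u ∈ X, ∀ v ∈ X, u ≠ v → IsCut {u} {v} (C u v))
    (hC_min : ∀ u ∈ X, ∀ v ∈ X, u ≠ v → ∀ U : Finset V, IsCut {u} {v} U →
      U = C u v ∨ lt (C u v) U)
    {a b c : V} (ha : a ∈ X) (hb : b ∈ X) (hc : c ∈ X) (hab : a ≠ b)
    (hbc : lt (C c b) (C b c)) (hca : lt (C a c) (C c a)) :
    lt (C c b) (C b a) ∨ lt (C a c) (C b a) := by
  have hcut := hC_cut b hb a ha hab.symm
  by_cases hcm : c ∈ C b a
  · have hb_ne_c : b ≠ c := by rintro rfl; exact irrefl_of lt _ hbc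
    left
    rcases hC_min b hb c hc hb_ne_c _ (hcut.of_mem hcm) with heq | hlt
    · rwa [heq]
    · exact trans_of lt hbc hlt
  · have hc_ne_a : c ≠ a := by rintro rfl; exact irrefl_of lt _ hca
    right
    rcases hC_min c hc a ha hc_ne_a _ (hcut.of_notMem hcm) with heq | hlt
    · rwa [heq]
    · exact trans_of lt hca hlt

theorem not_cycle
    (hC_cut : ∀ u ∈ X, ∀ v ∈ X, u ≠ v → IsCut {u} {v} (C u v))
    (hC_min : ∀ u ∈ X, ∀ v ∈ X, u ≠ v → ∀ U : Finset V, IsCut {u} {v} U →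
      U = C u v ∨ lt (C u v) U)
    {a b c : V} (ha : a ∈ X) (hb : b ∈ X) (hc : c ∈ X)
    (hab : lt (C b a) (C a b)) (hbc : lt (C c b) (C b c)) (hca : lt (C a c) (C c a)) : False := by
  have hne : ∀ {x y : V}, lt (C y x) (C x y) → x ≠ y := by
    rintro x y h rfl
    exact irrefl_of lt _ h
  exact false_of_three_no_minimal lt
    (lt_or_lt_of_cycle hC_cut hC_min ha hb hc (hne hab) hbc hca)
    (lt_or_lt_of_cycle hC_cut hC_min hb hc ha (hne hbc) hca hab)
    (lt_or_lt_of_cycle hC_cut hC_min hc ha hb (hne hca) hab hbc)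

end MinimalCuts

theorem sqsubseteq_total_order_general (w : V → V → ℝ)
    (X : Finset V)
    (lt : Finset V → Finset V → Prop)
    (hlt_irrefl : ∀ A, ¬ lt A A)
    (hlt_trans : ∀ A B C, lt A B → lt B C → lt A C)
    (hlt_total : ∀ A B : Finset V, A ≠ B → lt A B ∨ lt B A)
    (C : V → V → Finset V)
    (hC_cut : ∀ u ∈ X, ∀ v ∈ X, u ≠ v → IsMinCut w {u} {v} (C u v))
    (hC_min : ∀ u ∈ X, ∀ v ∈ X, u ≠ v → ∀ U : Finset V, IsCut {u} {v} U →
      U = C u v ∨ lt (C u v) U) :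
    (∀ a ∈ X, ∀ b ∈ X, (a = b ∨ lt (C b a) (C a b)) → (b = a ∨ lt (C a b) (C b a)) → a = b) ∧
    (∀ a ∈ X, ∀ b ∈ X, ∀ c ∈ X, (a = b ∨ lt (C b a) (C a b)) →
      (b = c ∨ lt (C c b) (C b c)) → (a = c ∨ lt (C c a) (C a c))) ∧
    (∀ a ∈ X, ∀ b ∈ X, (a = b ∨ lt (C b a) (C a b)) ∨ (b = a ∨ lt (C a b) (C b a))) := by
  have : IsStrictOrder (Finset V) lt := { irrefl := hlt_irrefl, trans := hlt_trans }
  have hcut : ∀ u ∈ X, ∀ v ∈ X, u ≠ v → IsCut {u} {v} (C u v) :=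
    fun u hu v hv huv => (hC_cut u hu v hv huv).1
  have hlt_or_lt : ∀ a ∈ X, ∀ b ∈ X, a ≠ b → lt (C a b) (C b a) ∨ lt (C b a) (C a b) :=
    fun a ha b hb hab => hlt_total _ _ ((hcut a ha b hb hab).ne_of_swap (hcut b hb a ha hab.symm))
  refine ⟨?_, ?_, ?_⟩
  · rintro a - b - (rfl | hab) (hba | hba)
    exacts [rfl, rfl, hba.symm, (asymm_of lt hab hba).elim]
  · rintro a ha b hb c hc (rfl | hab) (rfl | hbc)
    · exact Or.inl rfl
    · exact Or.inr hbc
    · exact Or.inr hab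
    by_cases hac : a = c
    · exact Or.inl hac
    refine Or.inr ((hlt_or_lt a ha c hc hac).resolve_left fun hca => ?_)
    exact not_cycle hcut hC_min ha hb hc hab hbc hca
  · intro a ha b hb
    by_cases hab : a = b
    · exact Or.inl (Or.inl hab)
    · exact (hlt_or_lt a ha b hb hab).symm.imp Or.inr Or.inr

/-- The relation `u ⊑ v ↔ u = v ∨ C_{vu} ≺ C_{uv}` defined from minimal (w.r.t. a strict
total order `≺` refining cut cost) minimum cuts is a total order on `X`. -/
theorem sqsubseteq_total_order (w : V → V → ℝ) (hw : ∀ u v, 0 ≤ w u v)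
    (hsym : ∀ u v, w u v = w v u)
    (X : Finset V)
    (lt : Finset V → Finset V → Prop)
    (hlt_irrefl : ∀ A, ¬ lt A A)
    (hlt_trans : ∀ A B C, lt A B → lt B C → lt A C)
    (hlt_total : ∀ A B : Finset V, A ≠ B → lt A B ∨ lt B A)
    (hlt_cost : ∀ A B : Finset V, cutCost w A < cutCost w B → lt A B)
    (C : V → V → Finset V)
    (hC_compl : ∀ u ∈ X, ∀ v ∈ X, u ≠ v → C v u = (C u v)ᶜ)
    (hC_cut : ∀ u ∈ X, ∀ v ∈ X, u ≠ v → IsMinCut w {u} {v} (C u v))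
    (hC_min : ∀ u ∈ X, ∀ v ∈ X, u ≠ v → ∀ U : Finset V, IsCut {u} {v} U →
      U = C u v ∨ lt (C u v) U) :
    (∀ a ∈ X, ∀ b ∈ X, (a = b ∨ lt (C b a) (C a b)) → (b = a ∨ lt (C a b) (C b a)) → a = b) ∧
    (∀ a ∈ X, ∀ b ∈ X, ∀ c ∈ X, (a = b ∨ lt (C b a) (C a b)) →
      (b = c ∨ lt (C c b) (C b c)) → (a = c ∨ lt (C c a) (C a c))) ∧
    (∀ a ∈ X, ∀ b ∈ X, (a = b ∨ lt (C b a) (C a b)) ∨ (b = a ∨ lt (C a b) (C b a))) :=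
  sqsubseteq_total_order_general w X lt hlt_irrefl hlt_trans hlt_total C hC_cut hC_min
end
end

section
/- Let V be a finite set, let X, Y be randomly chosen disjoint subsets of V of equal size q (chosen so that the unordered pair {X,Y} is fixed but the assignment of labels is uniform over the two orderings), and for disjoint nonempty subsets P,Q of the vertex set of a weighted graph G on V let T*_{P,Q} be the inclusion-minimal minimum P-Q cut. Then T*_{X,Y} and T*_{Y,X} are disjoint, and consequently E[|T*_{A,B}|] ≤ |V|/2 when (A,B) is uniform over {(X,Y),(Y,X)}. -/
/-!
Cut cost is posimodular for nonnegative symmetric weights: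
`c(A \ B) + c(B \ A) ≤ c(A) + c(B)`. If `A` is a minimum `X`-`Y` cut and `B` a minimum
`Y`-`X` cut, then `A \ B` is again an `X`-`Y` cut and `B \ A` a `Y`-`X` cut, so neither can
cost more than its minimum, and posimodularity forces `A \ B` to be a minimum `X`-`Y` cut.
Inclusion-minimality of `A = T*_{X,Y}` then gives `A \ B = A`, i.e. `A` and `B` are disjoint,
so `|A| + |B| ≤ |V|`.
-/

open Finset

variable {V : Type*} [Fintype V] [DecidableEq V]

noncomputable section

lemma cutCost_eq_sum_ite (w : V → V → ℝ) (U : Finset V) :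
    cutCost w U = ∑ u, ∑ v, if u ∈ U ∧ v ∉ U then w u v else 0 := by
  simp only [cutCost, ite_and, ← Finset.mem_compl, Finset.sum_ite_irrel, Finset.sum_const_zero,
    Finset.sum_ite_mem, Finset.univ_inter]

lemma two_mul_cutCost {w : V → V → ℝ} (hsym : ∀ u v, w u v = w v u) (U : Finset V) :
    2 * cutCost w U = ∑ u, ∑ v, if (u ∈ U ↔ v ∈ U) then 0 else w u v := by
  have split_pair : ∀ u v, (if (u ∈ U ↔ v ∈ U) then 0 else w u v) =
      (if u ∈ U ∧ v ∉ U then w u v else 0) + if v ∈ U ∧ u ∉ U then w v u else 0 := by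
    intro u v
    by_cases hu : u ∈ U <;> by_cases hv : v ∈ U <;> simp [hu, hv, hsym u v]
  simp only [split_pair, Finset.sum_add_distrib]
  rw [Finset.sum_comm (f := fun u v => if v ∈ U ∧ u ∉ U then w v u else 0),
    ← cutCost_eq_sum_ite, two_mul]

theorem cutCost_sdiff_add_cutCost_sdiff_le {w : V → V → ℝ} (hw : ∀ u v, 0 ≤ w u v)
    (hsym : ∀ u v, w u v = w v u) (A B : Finset V) :
    cutCost w (A \ B) + cutCost w (B \ A) ≤ cutCost w A + cutCost w B := by
  -- Summing over ordered pairs counts each crossing edge twice, and then the inequality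
  -- holds edge by edge: check the 16 membership patterns of `u, v` in `A, B`.
  have edgewise : ∀ u v, ((if (u ∈ A \ B ↔ v ∈ A \ B) then 0 else w u v) +
      if (u ∈ B \ A ↔ v ∈ B \ A) then 0 else w u v) ≤
      (if (u ∈ A ↔ v ∈ A) then 0 else w u v) + if (u ∈ B ↔ v ∈ B) then 0 else w u v := by
    intro u v
    have := hw u v
    simp only [Finset.mem_sdiff]
    by_cases hua : u ∈ A <;> by_cases hub : u ∈ B <;> by_cases hva : v ∈ A <;>
      by_cases hvb : v ∈ B <;> simp [*]
  suffices 2 * cutCost w (A \ B) + 2 * cutCost w (B \ A) ≤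
      2 * cutCost w A + 2 * cutCost w B by linarith
  simp only [two_mul_cutCost hsym, ← Finset.sum_add_distrib]
  exact Finset.sum_le_sum fun u _ => Finset.sum_le_sum fun v _ => edgewise u v

omit [Fintype V] in
lemma IsCut.sdiff {S T A B : Finset V} (hA : IsCut S T A) (hB : IsCut T S B) :
    IsCut S T (A \ B) :=
  ⟨Finset.subset_sdiff.2 ⟨hA.1, hB.2.symm⟩, hA.2.mono_left Finset.sdiff_subset⟩

lemma IsMinCut.sdiff {w : V → V → ℝ} (hw : ∀ u v, 0 ≤ w u v) (hsym : ∀ u v, w u v = w v u)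
    {S T A B : Finset V} (hA : IsMinCut w S T A) (hB : IsMinCut w T S B) :
    IsMinCut w S T (A \ B) := by
  have hAB := hA.1.sdiff hB.1
  have := minCutCost_le_cutCost w hAB
  have := minCutCost_le_cutCost w (hB.1.sdiff hA.1)
  have := cutCost_sdiff_add_cutCost_sdiff_le hw hsym A B
  exact ⟨hAB, by linarith [hA.2, hB.2]⟩

theorem minimal_minCuts_disjoint_expectation_general (w : V → V → ℝ) (hw : ∀ u v, 0 ≤ w u v)
    (hsym : ∀ u v, w u v = w v u)
    (X Y : Finset V)
    (TXY TYX : Finset V)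
    (hTXY : IsMinCut w X Y TXY)
    (hTXYmin : ∀ U, IsMinCut w X Y U → U ⊆ TXY → U = TXY)
    (hTYX : IsMinCut w Y X TYX) :
    Disjoint TXY TYX ∧
      ((TXY.card : ℝ) + (TYX.card : ℝ)) / 2 ≤ (Fintype.card V : ℝ) / 2 := by
  have hdisj : Disjoint TXY TYX :=
    Finset.sdiff_eq_self_iff_disjoint.1 (hTXYmin _ (hTXY.sdiff hw hsym hTYX) Finset.sdiff_subset)
  have hcard : TXY.card + TYX.card ≤ Fintype.card V :=
    Finset.card_union_of_disjoint hdisj ▸ Finset.card_le_univ _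
  refine ⟨hdisj, ?_⟩
  have : (TXY.card : ℝ) + TYX.card ≤ Fintype.card V := by exact_mod_cast hcard
  linarith

/-- For disjoint equal-size `X, Y`, the inclusion-minimal minimum `X`-`Y` cut and the
inclusion-minimal minimum `Y`-`X` cut are disjoint; consequently, the expected size of
`T*_{A,B}` over the uniform choice `(A,B) ∈ {(X,Y),(Y,X)}` is at most `|V|/2`. -/
theorem minimal_minCuts_disjoint_expectation (w : V → V → ℝ) (hw : ∀ u v, 0 ≤ w u v)
    (hsym : ∀ u v, w u v = w v u)
    (X Y : Finset V) (hXY : Disjoint X Y) (hX : X.Nonempty) (hY : Y.Nonempty)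
    (q : ℕ) (hqX : X.card = q) (hqY : Y.card = q)
    (TXY TYX : Finset V)
    (hTXY : IsMinCut w X Y TXY)
    (hTXYmin : ∀ U, IsMinCut w X Y U → U ⊆ TXY → U = TXY)
    (hTYX : IsMinCut w Y X TYX)
    (hTYXmin : ∀ U, IsMinCut w Y X U → U ⊆ TYX → U = TYX) :
    Disjoint TXY TYX ∧
      ((TXY.card : ℝ) + (TYX.card : ℝ)) / 2 ≤ (Fintype.card V : ℝ) / 2 :=
  minimal_minCuts_disjoint_expectation_general w hw hsym X Y TXY TYX hTXY hTXYmin hTYX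
end
end
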